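/- Let (R, m) be a Noetherian local ring of prime characteristic p and let I ⊆ J be ideals with I m-primary. Then for every q = p^e, λ(R/I^[q]) ≤ λ(J/I)·λ(R/m^[q]) + λ(R/J^[q]). -/

import Mathlib

open IsLocalRing

/-- The `q`-th Frobenius power `I^[q]`: the ideal generated by `q`-th powers of elements of `I`. -/
noncomputable def frobPow {R : Type*} [CommRing R] (I : Ideal R) (q : ℕ) : Ideal R :=
  Ideal.span ((fun x => x ^ q) '' (I : Set R))

/-- The length of an `R`-module, as a natural number. -/
noncomputable def len (R M : Type*) [Ring R] [AddCommGroup M] [Module R M] : ℕ :=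
  ((Order.krullDim (Submodule R M)).unbotD 0).toNat

/-- `I` is `m`-primary: a proper ideal containing a power of the maximal ideal. -/
def IsMPrimary {R : Type*} [CommRing R] [IsLocalRing R] (I : Ideal R) : Prop :=
  I ≠ ⊤ ∧ ∃ n : ℕ, maximalIdeal R ^ n ≤ I

/-!
Refine `I ⊆ J` by a composition series of `J/I`: `λ(J/I)` steps `K ⋖ K + Rx`, each with
`m x ⊆ K`. The Frobenius power is extension along the ring map `x ↦ x ^ q`, so
`(K + Rx)^[q] = K^[q] + R x^q` and `m^[q] x^q ⊆ K^[q]`. Thus each step down raises the colength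
of the Frobenius power by the length of a cyclic module killed by `m^[q]`, which is at most
`λ(R/m^[q])`. Since `I^[q]` is again `m`-primary, all lengths involved are finite.
-/

namespace Submodule

variable {R M : Type*} [Ring R] [AddCommGroup M] [Module R M]

theorem length_quotient_comap_subtype_add {A B C : Submodule R M} (hAB : A ≤ B) (hBC : B ≤ C) :
    Module.length R (C ⧸ A.comap C.subtype) =
      Module.length R (B ⧸ A.comap B.subtype) + Module.length R (C ⧸ B.comap C.subtype) := by
  refine Module.length_eq_add_of_exact
    (mapQ _ _ (inclusion hBC) (by rw [← comap_comp, subtype_comp_inclusion]))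
    (mapQ _ _ LinearMap.id (by rw [comap_id]; exact comap_mono hAB)) ?_ ?_ ?_
  · rw [injective_iff_map_eq_zero]
    intro x hx
    obtain ⟨x, rfl⟩ := Quotient.mk_surjective _ x
    simpa [Quotient.mk_eq_zero] using hx
  · intro x
    obtain ⟨x, rfl⟩ := Quotient.mk_surjective _ x
    exact ⟨Quotient.mk x, rfl⟩
  · intro x
    obtain ⟨x, rfl⟩ := Quotient.mk_surjective _ x
    simp only [mapQ_apply, LinearMap.id_coe, id_eq, Quotient.mk_eq_zero, mem_comap, subtype_apply,
      Set.mem_range]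
    refine ⟨fun hx => ⟨Quotient.mk ⟨x, hx⟩, rfl⟩, ?_⟩
    rintro ⟨y, hy⟩
    obtain ⟨y, rfl⟩ := Quotient.mk_surjective _ y
    rw [mapQ_apply, Quotient.eq] at hy
    simpa using B.sub_mem y.2 (hAB hy)

theorem length_quotient_eq_add {A B : Submodule R M} (hAB : A ≤ B) :
    Module.length R (M ⧸ A) =
      Module.length R (B ⧸ A.comap B.subtype) + Module.length R (M ⧸ B) := by
  have key := length_quotient_comap_subtype_add hAB (le_top : B ≤ ⊤)
  have quotient_top (N : Submodule R M) :
      Module.length R (↥(⊤ : Submodule R M) ⧸ N.comap (⊤ : Submodule R M).subtype) =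
        Module.length R (M ⧸ N) :=
    (Quotient.equiv _ N topEquiv (by ext; simp)).length_eq
  rwa [quotient_top, quotient_top] at key

theorem length_quotient_le_add_length_quotient_sup_span_singleton {A : Submodule R M}
    {C : Ideal R} {y : M} (h : ∀ c ∈ C, c • y ∈ A) :
    Module.length R (M ⧸ A) ≤
      Module.length R (R ⧸ C) + Module.length R (M ⧸ (A ⊔ R ∙ y)) := by
  rw [length_quotient_eq_add (le_sup_left : A ≤ A ⊔ R ∙ y)]
  gcongr
  set B := A ⊔ R ∙ y
  let v : B := ⟨y, mem_sup_right (mem_span_singleton_self y)⟩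
  refine Module.length_le_of_surjective
    (C.liftQ (LinearMap.toSpanSingleton R _ (Quotient.mk v)) fun c hc => ?_) ?_
  · rw [LinearMap.mem_ker, LinearMap.toSpanSingleton_apply, ← Quotient.mk_smul,
      Quotient.mk_eq_zero]
    exact h c hc
  · intro z
    obtain ⟨⟨b, hb⟩, rfl⟩ := Quotient.mk_surjective _ z
    obtain ⟨a, ha, _, hry, rfl⟩ := mem_sup.mp hb
    obtain ⟨r, rfl⟩ := mem_span_singleton.mp hry
    refine ⟨Quotient.mk r, ?_⟩
    rw [liftQ_apply, LinearMap.toSpanSingleton_apply, ← Quotient.mk_smul, Quotient.eq]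
    simpa [v] using A.neg_mem ha

theorem length_quotient_comap_subtype_le_length_quotient {A B : Submodule R M} (hAB : A ≤ B) :
    Module.length R (B ⧸ A.comap B.subtype) ≤ Module.length R (M ⧸ A) :=
  (length_quotient_eq_add hAB).ge.trans' le_self_add

theorem length_quotient_le_of_le {A B : Submodule R M} (hAB : A ≤ B) :
    Module.length R (M ⧸ B) ≤ Module.length R (M ⧸ A) :=
  (length_quotient_eq_add hAB).ge.trans' le_add_self

theorem _root_.CovBy.length_quotient_comap_subtype {K J : Submodule R M} (h : K ⋖ J) :
    Module.length R (J ⧸ K.comap J.subtype) = 1 :=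
  have := (covBy_iff_quot_is_simple h.le).mp h
  Module.length_eq_one R _

theorem _root_.CovBy.sup_span_singleton_eq {K J : Submodule R M} (h : K ⋖ J) {x : M}
    (hxJ : x ∈ J) (hxK : x ∉ K) : K ⊔ R ∙ x = J :=
  (h.eq_or_eq le_sup_left (sup_le h.le (span_singleton_le_iff_mem x J |>.mpr hxJ))).resolve_left
    fun e => hxK (e ▸ mem_sup_right (mem_span_singleton_self x))

end Submodule

theorem CovBy.maximalIdeal_smul_le {R M : Type*} [CommRing R] [IsLocalRing R] [AddCommGroup M]
    [Module R M] {K J : Submodule R M} (h : K ⋖ J) : maximalIdeal R • J ≤ K := by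
  have := (covBy_iff_quot_is_simple h.le).mp h
  have hann := eq_maximalIdeal (IsSimpleModule.annihilator_isMaximal (R := R)
    (M := J ⧸ K.comap J.subtype))
  refine Submodule.smul_le.mpr fun r hr x hx => ?_
  rw [← hann, Module.mem_annihilator] at hr
  simpa [← Submodule.Quotient.mk_smul, Submodule.Quotient.mk_eq_zero] using
    hr (Submodule.Quotient.mk ⟨x, hx⟩)

section LengthMap

variable {R S : Type*} [CommRing R] [IsLocalRing R] [CommRing S] (f : R →+* S)

theorem CovBy.length_quotient_map_le {K J : Ideal R} (h : K ⋖ J) :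
    Module.length S (S ⧸ K.map f) ≤
      Module.length S (S ⧸ (maximalIdeal R).map f) + Module.length S (S ⧸ J.map f) := by
  obtain ⟨x, hxJ, hxK⟩ := SetLike.exists_of_lt h.lt
  have hmx : maximalIdeal R * Ideal.span {x} ≤ K :=
    (Ideal.mul_mono_right ((Ideal.span_singleton_le_iff_mem J).mpr hxJ)).trans
      h.maximalIdeal_smul_le
  have hJ : J.map f = K.map f ⊔ S ∙ f x := by
    rw [← h.sup_span_singleton_eq hxJ hxK, Ideal.map_sup, Ideal.submodule_span_eq,
      Ideal.submodule_span_eq, Ideal.map_span, Set.image_singleton]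
  rw [hJ]
  refine Submodule.length_quotient_le_add_length_quotient_sup_span_singleton fun c hc => ?_
  have hcx := Ideal.mul_mem_mul hc (Ideal.mem_span_singleton_self (f x))
  rw [← Set.image_singleton, ← Ideal.map_span, ← Ideal.map_mul] at hcx
  exact Ideal.map_mono hmx hcx

theorem length_quotient_map_le [IsNoetherianRing R] {I J : Ideal R} (hIJ : I ≤ J)
    (hfin : Module.length R (J ⧸ Submodule.comap J.subtype I) ≠ ⊤) :
    Module.length S (S ⧸ I.map f) ≤
      Module.length R (J ⧸ Submodule.comap J.subtype I) *
          Module.length S (S ⧸ (maximalIdeal R).map f) + Module.length S (S ⧸ J.map f) := by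
  obtain ⟨n, hn⟩ := ENat.ne_top_iff_exists.mp hfin
  rw [← hn]
  clear hfin
  induction n generalizing J with
  | zero =>
    have hJI : J ≤ I := by
      rw [Nat.cast_zero, eq_comm, Module.length_eq_zero_iff, Submodule.Quotient.subsingleton_iff,
        Submodule.comap_subtype_eq_top] at hn
      exact hn
    rw [le_antisymm hJI hIJ]
    simp
  | succ n ih =>
    have hlt : I < J := hIJ.lt_of_ne (by rintro rfl; simp at hn)
    obtain ⟨K, hIK, hKJ⟩ := exists_le_covBy_of_lt hlt
    have hKn : n = Module.length R (K ⧸ Submodule.comap K.subtype I) := by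
      rw [Submodule.length_quotient_comap_subtype_add hIK hKJ.le,
        hKJ.length_quotient_comap_subtype, Nat.cast_succ] at hn
      exact WithTop.add_right_cancel ENat.one_ne_top hn
    calc Module.length S (S ⧸ I.map f)
        ≤ n * Module.length S (S ⧸ (maximalIdeal R).map f) + Module.length S (S ⧸ K.map f) :=
          ih hIK hKn
      _ ≤ n * Module.length S (S ⧸ (maximalIdeal R).map f) +
          (Module.length S (S ⧸ (maximalIdeal R).map f) + Module.length S (S ⧸ J.map f)) := by
          gcongr
          exact hKJ.length_quotient_map_le f
      _ = _ := by push_cast; ring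

end LengthMap

section

variable {R : Type*} [CommRing R]

theorem IsLocalRing.length_quotient_ne_top_of_pow_le [IsLocalRing R] [IsNoetherianRing R]
    {A : Ideal R} {n : ℕ} (h : maximalIdeal R ^ n ≤ A) :
    Module.length R (R ⧸ A) ≠ ⊤ := by
  by_cases hA : A = ⊤
  · subst hA
    simp [Module.length_eq_zero]
  have hmin : maximalIdeal R ∈ A.minimalPrimes :=
    ⟨⟨(maximalIdeal.isMaximal R).isPrime, le_maximalIdeal hA⟩,
      fun P hP _ => hP.1.le_of_pow_le (h.trans hP.2)⟩
  have := IsLocalRing.quotient_artinian_of_mem_minimalPrimes_of_isLocalRing A hmin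
  have : IsArtinian R (R ⧸ A) :=
    isArtinian_of_surjective_algebraMap (Ideal.Quotient.mk_surjective (I := A))
  exact Module.length_ne_top

theorem frobPow_mono {A B : Ideal R} (h : A ≤ B) (q : ℕ) : frobPow A q ≤ frobPow B q :=
  Ideal.span_mono (Set.image_mono h)

theorem frobPow_le_self (A : Ideal R) {q : ℕ} (hq : q ≠ 0) : frobPow A q ≤ A :=
  Ideal.span_le.mpr (Set.image_subset_iff.mpr fun _ hx => A.pow_mem_of_mem hx q hq.bot_lt)

theorem frobPow_eq_map_iterateFrobenius (p : ℕ) [ExpChar R p] (A : Ideal R) (e : ℕ) :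
    frobPow A (p ^ e) = A.map (iterateFrobenius R p e) :=
  rfl

theorem IsLocalRing.length_quotient_frobPow_ne_top [IsLocalRing R] [IsNoetherianRing R]
    {A : Ideal R} {n : ℕ} (h : maximalIdeal R ^ n ≤ A) (q : ℕ) :
    Module.length R (R ⧸ frobPow A q) ≠ ⊤ := by
  have hrad : maximalIdeal R ≤ (frobPow A q).radical := fun y hy =>
    ⟨n * q, pow_mul y n q ▸ Ideal.subset_span ⟨_, h (Ideal.pow_mem_pow hy n), rfl⟩⟩
  obtain ⟨N, hN⟩ := Ideal.exists_pow_le_of_le_radical_of_fg hrad (IsNoetherian.noetherian _)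
  exact length_quotient_ne_top_of_pow_le hN

end

theorem len_eq_toNat_length (R M : Type*) [Ring R] [AddCommGroup M] [Module R M] :
    len R M = (Module.length R M).toNat := by
  rw [len, ← Module.coe_length, WithBot.unbotD_coe]

theorem ENat.toNat_le_toNat_mul_add {a b c d : ℕ∞} (h : a ≤ b * c + d) (hb : b ≠ ⊤)
    (hc : c ≠ ⊤) (hd : d ≠ ⊤) : a.toNat ≤ b.toNat * c.toNat + d.toNat := by
  lift b to ℕ using hb
  lift c to ℕ using hc
  lift d to ℕ using hd
  rw [← Nat.cast_mul, ← Nat.cast_add] at h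
  simpa only [ENat.toNat_natCast] using ENat.toNat_le_toNat h (ENat.natCast_ne_top _)

theorem length_frobPow_le_filtration_bound
    (R : Type*) [CommRing R] [IsLocalRing R] [IsNoetherianRing R]
    (p : ℕ) [Fact p.Prime] [CharP R p]
    (I J : Ideal R) (hIJ : I ≤ J) (hI : IsMPrimary I) :
    ∀ e : ℕ,
      len R (R ⧸ frobPow I (p ^ e)) ≤
        len R (↥J ⧸ Submodule.comap J.subtype I) * len R (R ⧸ frobPow (maximalIdeal R) (p ^ e))
          + len R (R ⧸ frobPow J (p ^ e)) := by
  intro e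
  obtain ⟨hI_ne_top, n, hn⟩ := hI
  have key := length_quotient_map_le (iterateFrobenius R p e) hIJ
  rw [← frobPow_eq_map_iterateFrobenius p I, ← frobPow_eq_map_iterateFrobenius p J,
    ← frobPow_eq_map_iterateFrobenius p (maximalIdeal R)] at key
  have hfin := length_quotient_frobPow_ne_top hn (p ^ e)
  have hle_of_le {A : Ideal R} (hA : I ≤ A) :
      Module.length R (R ⧸ frobPow A (p ^ e)) ≤ Module.length R (R ⧸ frobPow I (p ^ e)) :=
    Submodule.length_quotient_le_of_le (frobPow_mono hA _)
  have hJI_fin : Module.length R (J ⧸ Submodule.comap J.subtype I) ≠ ⊤ :=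
    ne_top_of_le_ne_top hfin <|
      (Submodule.length_quotient_comap_subtype_le_length_quotient hIJ).trans
        (Submodule.length_quotient_le_of_le (frobPow_le_self I (expChar_pow_pos R p e).ne'))
  have hm_fin := ne_top_of_le_ne_top hfin (hle_of_le (le_maximalIdeal hI_ne_top))
  have hJ_fin := ne_top_of_le_ne_top hfin (hle_of_le hIJ)
  simp only [len_eq_toNat_length]
  exact ENat.toNat_le_toNat_mul_add (key hJI_fin) hJI_fin hm_fin hJ_fin
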